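/- Let $p \in (0,1)$ and $q = p' = p/(p-1) < 0$, and let $f : \mathbb{R}^n \to [0,\infty)$ be measurable with $0 < \int_{\mathbb{R}^n} f\, dz < +\infty$. Then $\int_{\mathbb{R}^n} \big( \int_{\mathbb{R}^n} e^{\frac1p\langle x, z\rangle} f(z)^{1/p}\, dz \big)^q dx \ \ge\ \big( \int_{\mathbb{R}^n} f\, dz \big)^q (1-p)^n \int_{\mathbb{R}^n} f^\circ(x)\, dx$. -/

import Mathlib

open MeasureTheory Real Filter
open scoped ENNReal

noncomputable section

/-- The polar (dual) function `f°(x) = inf_y exp(-⟨x,y⟩)/f(y)`, valued in `[0,∞]`. -/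
def polarFn {n : ℕ} (f : EuclideanSpace ℝ (Fin n) → ℝ) (x : EuclideanSpace ℝ (Fin n)) : ℝ≥0∞ :=
  ⨅ y : EuclideanSpace ℝ (Fin n),
    ENNReal.ofReal (Real.exp (-(inner ℝ x y : ℝ))) / ENNReal.ofReal (f y)

/-! With `c = (1 - p) / p` one has `1 / p = 1 + c` and `q = -1 / c`. The definition of the polar
function gives `f z * e^⟨u, z⟩ ≤ (f° u)⁻¹`, hence `e^(c⟨u, z⟩) f(z)^(1 + c) ≤ f z * (f° u)^(-c)`.
Integrating in `z` and raising to the negative power `q` yields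
`(∫ f)^q f°(u) ≤ (∫ e^(c⟨u, z⟩) f(z)^(1/p) dz)^q`, the integrand of the right side at `x = (1 - p) u`.
Integrating in `u` and substituting `x = (1 - p) u` produces the factor `(1 - p)^n`. -/

theorem ENNReal.rpow_le_rpow_of_nonpos {a b : ℝ≥0∞} {z : ℝ} (hab : a ≤ b) (hz : z ≤ 0) :
    b ^ z ≤ a ^ z := by
  obtain ⟨s, hs, rfl⟩ : ∃ s, 0 ≤ s ∧ z = -s := ⟨-z, by linarith, by ring⟩
  rw [ENNReal.rpow_neg, ENNReal.rpow_neg]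
  exact ENNReal.inv_le_inv' (ENNReal.rpow_le_rpow hab hs)

/-- Not an equality: for `a = 0`, `b = ∞` and `z < 0` the left side is `∞ * 0 = 0`. -/
theorem ENNReal.rpow_mul_rpow_le_mul_rpow_of_nonpos (a b : ℝ≥0∞) {z : ℝ} (hz : z ≤ 0) :
    a ^ z * b ^ z ≤ (a * b) ^ z := by
  obtain ⟨s, hs, rfl⟩ : ∃ s, 0 ≤ s ∧ z = -s := ⟨-z, by linarith, by ring⟩
  have hinv : a⁻¹ * b⁻¹ ≤ (a * b)⁻¹ := by
    rw [ENNReal.le_inv_iff_mul_le, mul_mul_mul_comm]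
    exact mul_le_one' (ENNReal.inv_mul_le_one a) (ENNReal.inv_mul_le_one b)
  simp only [ENNReal.rpow_neg, ← ENNReal.inv_rpow, ← ENNReal.mul_rpow_of_nonneg _ _ hs]
  exact ENNReal.rpow_le_rpow hinv hs

theorem MeasureTheory.Measure.lintegral_comp_smul_of_ne_zero {E : Type*}
    [NormedAddCommGroup E] [NormedSpace ℝ E] [MeasurableSpace E] [BorelSpace E]
    [FiniteDimensional ℝ E] (μ : Measure E) [μ.IsAddHaarMeasure] (F : E → ℝ≥0∞) {r : ℝ}
    (hr : r ≠ 0) :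
    ∫⁻ x, F (r • x) ∂μ = ENNReal.ofReal |(r ^ Module.finrank ℝ E)⁻¹| * ∫⁻ x, F x ∂μ := by
  let T : E ≃ᵐ E := (Homeomorph.smul (isUnit_iff_ne_zero.2 hr).unit).toMeasurableEquiv
  rw [← smul_eq_mul, ← lintegral_smul_measure, ← map_addHaar_smul μ hr]
  exact (lintegral_map_equiv F T).symm

theorem ofReal_mul_exp_inner_le_inv_polarFn {n : ℕ} (f : EuclideanSpace ℝ (Fin n) → ℝ)
    (u z : EuclideanSpace ℝ (Fin n)) :
    ENNReal.ofReal (f z) * ENNReal.ofReal (exp (inner ℝ u z)) ≤ (polarFn f u)⁻¹ := by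
  rw [ENNReal.le_inv_iff_mul_le]
  calc ENNReal.ofReal (f z) * ENNReal.ofReal (exp (inner ℝ u z)) * polarFn f u
      ≤ ENNReal.ofReal (f z) * ENNReal.ofReal (exp (inner ℝ u z)) *
          (ENNReal.ofReal (exp (-inner ℝ u z)) / ENNReal.ofReal (f z)) := by
        gcongr; exact iInf_le _ z
    _ = ENNReal.ofReal (f z) * (ENNReal.ofReal (exp (-inner ℝ u z)) / ENNReal.ofReal (f z)) *
          ENNReal.ofReal (exp (inner ℝ u z)) := by ring
    _ ≤ ENNReal.ofReal (exp (-inner ℝ u z)) * ENNReal.ofReal (exp (inner ℝ u z)) := by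
        gcongr; exact ENNReal.mul_div_le
    _ = 1 := by
        rw [← ENNReal.ofReal_mul (exp_pos _).le, ← exp_add, neg_add_cancel, exp_zero,
          ENNReal.ofReal_one]

theorem lintegral_exp_inner_mul_rpow_le_mul_polarFn_rpow {n : ℕ}
    (μ : Measure (EuclideanSpace ℝ (Fin n))) {f : EuclideanSpace ℝ (Fin n) → ℝ}
    (hf : Measurable f) {c : ℝ} (hc : 0 ≤ c) (u : EuclideanSpace ℝ (Fin n)) :
    ∫⁻ z, ENNReal.ofReal (exp (c * inner ℝ u z)) * ENNReal.ofReal (f z) ^ (1 + c) ∂μ ≤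
      (∫⁻ z, ENNReal.ofReal (f z) ∂μ) * polarFn f u ^ (-c) := by
  rw [← lintegral_mul_const _ hf.ennreal_ofReal]
  refine lintegral_mono fun z => ?_
  calc ENNReal.ofReal (exp (c * inner ℝ u z)) * ENNReal.ofReal (f z) ^ (1 + c)
      = ENNReal.ofReal (f z) *
          (ENNReal.ofReal (f z) * ENNReal.ofReal (exp (inner ℝ u z))) ^ c := by
        rw [ENNReal.rpow_add_of_nonneg _ _ zero_le_one hc, ENNReal.rpow_one,
          ENNReal.mul_rpow_of_nonneg _ _ hc, ENNReal.ofReal_rpow_of_nonneg (exp_pos _).le hc,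
          ← exp_mul, mul_comm (inner ℝ u z) c]
        ring
    _ ≤ ENNReal.ofReal (f z) * (polarFn f u)⁻¹ ^ c := by
        gcongr; exact ofReal_mul_exp_inner_le_inv_polarFn f u z
    _ = ENNReal.ofReal (f z) * polarFn f u ^ (-c) := by
        rw [ENNReal.inv_rpow, ENNReal.rpow_neg]

theorem lintegral_rpow_mul_polarFn_le {n : ℕ}
    (μ : Measure (EuclideanSpace ℝ (Fin n))) {f : EuclideanSpace ℝ (Fin n) → ℝ}
    (hf : Measurable f) {c : ℝ} (hc : 0 < c) (u : EuclideanSpace ℝ (Fin n)) :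
    (∫⁻ z, ENNReal.ofReal (f z) ∂μ) ^ (-c⁻¹) * polarFn f u ≤
      (∫⁻ z, ENNReal.ofReal (exp (c * inner ℝ u z)) * ENNReal.ofReal (f z) ^ (1 + c) ∂μ) ^
        (-c⁻¹) := by
  have hexp : -c⁻¹ ≤ 0 := by simpa using hc.le
  calc (∫⁻ z, ENNReal.ofReal (f z) ∂μ) ^ (-c⁻¹) * polarFn f u
      = (∫⁻ z, ENNReal.ofReal (f z) ∂μ) ^ (-c⁻¹) * (polarFn f u ^ (-c)) ^ (-c⁻¹) := by
        rw [← ENNReal.rpow_mul, neg_mul_neg, mul_inv_cancel₀ hc.ne', ENNReal.rpow_one]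
    _ ≤ ((∫⁻ z, ENNReal.ofReal (f z) ∂μ) * polarFn f u ^ (-c)) ^ (-c⁻¹) :=
        ENNReal.rpow_mul_rpow_le_mul_rpow_of_nonpos _ _ hexp
    _ ≤ _ := ENNReal.rpow_le_rpow_of_nonpos
        (lintegral_exp_inner_mul_rpow_le_mul_polarFn_rpow μ hf hc.le u) hexp

theorem expTransform_integral_ge_general (n : ℕ) (p q : ℝ)
    (hp0 : 0 < p) (hp1 : p < 1) (hq : q = p / (p - 1))
    (f : EuclideanSpace ℝ (Fin n) → ℝ)
    (hmeas : Measurable f) :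
    (∫⁻ z, ENNReal.ofReal (f z)) ^ q * ENNReal.ofReal ((1 - p) ^ n) *
        (∫⁻ x, polarFn f x) ≤
      ∫⁻ x, (∫⁻ z, ENNReal.ofReal (Real.exp ((1 / p) * (inner ℝ x z : ℝ))) *
        ENNReal.ofReal (f z) ^ (1 / p)) ^ q := by
  set c := (1 - p) / p
  have hc : 0 < c := div_pos (by linarith) hp0
  have hq' : q = -c⁻¹ := by rw [hq, inv_div, ← div_neg, neg_sub]
  have h1p : 1 / p = 1 + c := by simp only [c]; field_simp; ring
  have hinner : ∀ u z : EuclideanSpace ℝ (Fin n),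
      1 / p * inner ℝ ((1 - p) • u) z = c * inner ℝ u z := fun u z => by
    rw [real_inner_smul_left]; ring
  set G : EuclideanSpace ℝ (Fin n) → ℝ≥0∞ := fun x =>
    (∫⁻ z, ENNReal.ofReal (Real.exp ((1 / p) * (inner ℝ x z : ℝ))) *
      ENNReal.ofReal (f z) ^ (1 / p)) ^ q
  have hG : ∀ u, (∫⁻ z, ENNReal.ofReal (f z)) ^ q * polarFn f u ≤ G ((1 - p) • u) := by
    intro u
    simp only [G, hinner, hq']
    rw [h1p]
    exact lintegral_rpow_mul_polarFn_le volume hmeas hc u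
  calc (∫⁻ z, ENNReal.ofReal (f z)) ^ q * ENNReal.ofReal ((1 - p) ^ n) * ∫⁻ x, polarFn f x
      = ENNReal.ofReal ((1 - p) ^ n) *
          ((∫⁻ z, ENNReal.ofReal (f z)) ^ q * ∫⁻ x, polarFn f x) := by ring
    _ ≤ ENNReal.ofReal ((1 - p) ^ n) *
          ∫⁻ u, (∫⁻ z, ENNReal.ofReal (f z)) ^ q * polarFn f u := by
        gcongr; exact lintegral_const_mul_le _ _
    _ ≤ ENNReal.ofReal ((1 - p) ^ n) * ∫⁻ u, G ((1 - p) • u) := by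
        gcongr with u; exact hG u
    _ = ∫⁻ x, G x := by
        rw [Measure.lintegral_comp_smul_of_ne_zero _ _ (by linarith : 1 - p ≠ 0),
          finrank_euclideanSpace_fin, ← mul_assoc, ← ENNReal.ofReal_mul (by positivity),
          abs_of_pos (by positivity), mul_inv_cancel₀ (by positivity), ENNReal.ofReal_one, one_mul]

/-- For `0 < p < 1`, `q = p/(p-1)` and `0 < ∫ f < ∞`:
`∫ (∫ e^{⟨x,z⟩/p} f(z)^{1/p} dz)^q dx ≥ (∫ f)^q (1-p)^n ∫ f° dx`. -/
theorem expTransform_integral_ge (n : ℕ) (hn : 1 ≤ n) (p q : ℝ)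
    (hp0 : 0 < p) (hp1 : p < 1) (hq : q = p / (p - 1))
    (f : EuclideanSpace ℝ (Fin n) → ℝ)
    (hmeas : Measurable f) (hpos : ∀ z, 0 ≤ f z)
    (hlow : 0 < ∫⁻ z, ENNReal.ofReal (f z))
    (hup : (∫⁻ z, ENNReal.ofReal (f z)) < ⊤) :
    (∫⁻ z, ENNReal.ofReal (f z)) ^ q * ENNReal.ofReal ((1 - p) ^ n) *
        (∫⁻ x, polarFn f x) ≤
      ∫⁻ x, (∫⁻ z, ENNReal.ofReal (Real.exp ((1 / p) * (inner ℝ x z : ℝ))) *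
        ENNReal.ofReal (f z) ^ (1 / p)) ^ q :=
  expTransform_integral_ge_general n p q hp0 hp1 hq f hmeas

end
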